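/- arXiv:2310.17137 — 2 statements merged into one kernel-verified Lean document; each statement's English description precedes it below -/
import Mathlib

section
/- Under the alternating projection update with block I — i.e., W⁽ʲ⁺¹⁾ = W⁽ʲ⁾ + E_Iᵀ K_{I,I}⁻¹ E_I R⁽ʲ⁾ where R⁽ʲ⁾ = B − KW⁽ʲ⁾ — the quadratic objective h(W) = (1/2) tr(Wᵀ K W) − tr(Bᵀ W) decreases by exactly h(W⁽ʲ⁺¹⁾) − h(W⁽ʲ⁾) = −(1/2) tr(R⁽ʲ⁾_{I,:}ᵀ K_{I,I}⁻¹ R⁽ʲ⁾_{I,:}). -/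
open Matrix

/-!
Expanding `h` along a step `D` gives `h(W + D) − h(W) = ½ tr(Dᵀ K D) − tr(Dᵀ R)`. For the
block step `D = E_Iᵀ K_{I,I}⁻¹ E_I R` both traces equal `tr(R_Iᵀ K_{I,I}⁻¹ R_I)`, since
`K_{I,I} = E_I K E_Iᵀ` is symmetric and, as a principal submatrix of `K`, positive definite.
-/

/-- The row-selection matrix `E_I`: rows of the identity indexed by `I`. -/
def rowSel {n : ℕ} (I : Finset (Fin n)) : Matrix I (Fin n) ℝ :=
  Matrix.of fun i j => if (i : Fin n) = j then 1 else 0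

/-- The quadratic objective `h(W) = (1/2) tr(Wᵀ K W) − tr(Bᵀ W)`. -/
noncomputable def quadObj {n l : ℕ} (K : Matrix (Fin n) (Fin n) ℝ)
    (B W : Matrix (Fin n) (Fin l) ℝ) : ℝ :=
  (1 / 2) * (Wᵀ * K * W).trace - (Bᵀ * W).trace

namespace Matrix

variable {ι m p α : Type*} [Fintype ι] [CommRing α]

theorem IsSymm.mul_mul_transpose {K : Matrix ι ι α} (hK : K.IsSymm) (E : Matrix m ι α) :
    (E * K * Eᵀ).IsSymm := by
  rw [IsSymm, transpose_mul, transpose_mul, transpose_transpose, hK.eq, Matrix.mul_assoc]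

variable [Fintype m] [DecidableEq m]

noncomputable def blockCorrection (K : Matrix ι ι α) (E : Matrix m ι α) (R : Matrix ι p α) :
    Matrix ι p α :=
  Eᵀ * (E * K * Eᵀ)⁻¹ * (E * R)

variable {K : Matrix ι ι α} (E : Matrix m ι α) (R : Matrix ι p α)

theorem transpose_blockCorrection (hK : K.IsSymm) :
    (blockCorrection K E R)ᵀ = (E * R)ᵀ * (E * K * Eᵀ)⁻¹ * E := by
  rw [blockCorrection, transpose_mul, transpose_mul Eᵀ, (hK.mul_mul_transpose E).inv.eq,
    transpose_transpose, ← Matrix.mul_assoc]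

theorem blockCorrection_transpose_mul (hK : K.IsSymm) :
    (blockCorrection K E R)ᵀ * R = (E * R)ᵀ * (E * K * Eᵀ)⁻¹ * (E * R) := by
  rw [transpose_blockCorrection E R hK, Matrix.mul_assoc _ E]

theorem blockCorrection_transpose_mul_mul (hK : K.IsSymm) (hM : IsUnit (E * K * Eᵀ).det) :
    (blockCorrection K E R)ᵀ * K * blockCorrection K E R
      = (E * R)ᵀ * (E * K * Eᵀ)⁻¹ * (E * R) := by
  rw [transpose_blockCorrection E R hK, blockCorrection]
  calc (E * R)ᵀ * (E * K * Eᵀ)⁻¹ * E * K * (Eᵀ * (E * K * Eᵀ)⁻¹ * (E * R))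
      = (E * R)ᵀ * ((E * K * Eᵀ)⁻¹ * (E * K * Eᵀ)) * (E * K * Eᵀ)⁻¹ * (E * R) := by
        simp only [Matrix.mul_assoc]
    _ = (E * R)ᵀ * (E * K * Eᵀ)⁻¹ * (E * R) := by
        rw [nonsing_inv_mul _ hM, Matrix.mul_one]

end Matrix

theorem quadObj_add_sub {n l : ℕ} {K : Matrix (Fin n) (Fin n) ℝ} (hK : K.IsSymm)
    (B W D : Matrix (Fin n) (Fin l) ℝ) :
    quadObj K B (W + D) - quadObj K B W
      = (1 / 2) * (Dᵀ * K * D).trace - (Dᵀ * (B - K * W)).trace := by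
  have hcross : (Wᵀ * K * D).trace = (Dᵀ * K * W).trace := by
    rw [← trace_transpose, transpose_mul, transpose_mul, transpose_transpose, hK.eq,
      Matrix.mul_assoc]
  have hlin : (Bᵀ * D).trace = (Dᵀ * B).trace := by
    rw [← trace_transpose, transpose_mul, transpose_transpose]
  simp only [quadObj, transpose_add, Matrix.add_mul, Matrix.mul_add, Matrix.mul_sub,
    trace_add, trace_sub, ← Matrix.mul_assoc, hcross, hlin]
  ring

theorem rowSel_mul_mul_transpose {n : ℕ} (I : Finset (Fin n)) (K : Matrix (Fin n) (Fin n) ℝ) :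
    rowSel I * K * (rowSel I)ᵀ = K.submatrix (↑) (↑) := by
  ext i j
  simp [rowSel, mul_apply]

/-- One alternating projection update with block `I` decreases the quadratic
objective by exactly `(1/2) tr(R_{I,:}ᵀ K_{I,I}⁻¹ R_{I,:})`. -/
theorem altproj_objective_decrease {n l : ℕ} (K : Matrix (Fin n) (Fin n) ℝ)
    (hK : K.PosDef) (B : Matrix (Fin n) (Fin l) ℝ)
    (I : Finset (Fin n)) (W W' R : Matrix (Fin n) (Fin l) ℝ)
    (hR : R = B - K * W)
    (hW' : W' = W + (rowSel I)ᵀ * (rowSel I * K * (rowSel I)ᵀ)⁻¹ * (rowSel I * R)) :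
    quadObj K B W' - quadObj K B W
      = -((1 / 2) * ((rowSel I * R)ᵀ * (rowSel I * K * (rowSel I)ᵀ)⁻¹ *
          (rowSel I * R)).trace) := by
  have hKsymm : K.IsSymm := hK.isHermitian
  have hM : IsUnit (rowSel I * K * (rowSel I)ᵀ).det := by
    rw [rowSel_mul_mul_transpose]
    exact (hK.submatrix Subtype.val_injective).det_pos.ne'.isUnit
  rw [hW', ← blockCorrection, quadObj_add_sub hKsymm, ← hR,
    blockCorrection_transpose_mul_mul _ _ hKsymm hM, blockCorrection_transpose_mul _ _ hKsymm]
  ring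
end

section
/- Let K be symmetric positive definite with smallest eigenvalue λ_min, let P be a partition of {1,…,n} into m blocks, and let λ'_max = max_{I ∈ P} λ_max(K_{I,I}). If the alternating projection iteration selects at each step the block I maximizing ‖R⁽ʲ⁾_{I,:}‖_F² (Gauss–Southwell rule), then h(W⁽ʲ⁺¹⁾) − h(W*) ≤ (1 − λ_min/(m λ'_max)) (h(W⁽ʲ⁾) − h(W*)), where h(W) = (1/2) tr(Wᵀ K W) − tr(Bᵀ W) and W* = K⁻¹B. -/
/-!
Write `R = B - K W` for the residual. The suboptimality is `h W - h W* = ½ tr (Rᵀ K⁻¹ R)`, at most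
`‖R‖²_F / (2 λ_min)`, while the block update with `S = E_I R` lowers `h` by exactly
`½ tr (Sᵀ K_{I,I}⁻¹ S)`, at least `‖S‖²_F / (2 λ'_max)`. Since the blocks cover all rows, the
Gauss–Southwell choice gives `‖R‖²_F ≤ m ‖S‖²_F`, and the three bounds combine to the contraction.
-/

open Matrix

section Spectral

variable {k l : Type*} [Fintype k] [Fintype l]

theorem trace_transpose_mul_self (S : Matrix k l ℝ) :
    (Sᵀ * S).trace = ∑ i, ∑ j, S i j ^ 2 := by
  simp only [trace, diag_apply, mul_apply, transpose_apply, sq]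
  exact Finset.sum_comm

variable [DecidableEq k]

theorem trace_transpose_mul_diagonal_mul (d : k → ℝ) (S : Matrix k l ℝ) :
    (Sᵀ * diagonal d * S).trace = ∑ i, d i * ∑ j, S i j ^ 2 := by
  simp only [trace, diag_apply, mul_apply (M := Sᵀ * diagonal d), mul_diagonal, transpose_apply,
    Finset.mul_sum]
  rw [Finset.sum_comm]
  exact Finset.sum_congr rfl fun _ _ => Finset.sum_congr rfl fun _ _ => by ring

theorem trace_transpose_mul_conj_diagonal_mul (U : Matrix k k ℝ) (d : k → ℝ)
    (S : Matrix k l ℝ) :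
    (Sᵀ * (U * diagonal d * Uᵀ) * S).trace = ∑ i, d i * ∑ j, (Uᵀ * S) i j ^ 2 := by
  rw [← trace_transpose_mul_diagonal_mul, transpose_mul, transpose_transpose]
  simp only [Matrix.mul_assoc]

theorem trace_transpose_mul_self_eq_of_mul_transpose_eq_one {U : Matrix k k ℝ}
    (hU : U * Uᵀ = 1) (S : Matrix k l ℝ) :
    (Sᵀ * S).trace = ∑ i, ∑ j, (Uᵀ * S) i j ^ 2 := by
  rw [← trace_transpose_mul_self, transpose_mul, transpose_transpose, Matrix.mul_assoc,
    ← Matrix.mul_assoc U, hU, Matrix.one_mul]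

theorem trace_transpose_mul_conj_diagonal_mul_le {U : Matrix k k ℝ} (hU : U * Uᵀ = 1)
    {d : k → ℝ} {c : ℝ} (hd : ∀ i, d i ≤ c) (S : Matrix k l ℝ) :
    (Sᵀ * (U * diagonal d * Uᵀ) * S).trace ≤ c * (Sᵀ * S).trace := by
  rw [trace_transpose_mul_conj_diagonal_mul, trace_transpose_mul_self_eq_of_mul_transpose_eq_one hU,
    Finset.mul_sum]
  gcongr with i
  exact hd i

theorem le_trace_transpose_mul_conj_diagonal_mul {U : Matrix k k ℝ} (hU : U * Uᵀ = 1)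
    {d : k → ℝ} {c : ℝ} (hd : ∀ i, c ≤ d i) (S : Matrix k l ℝ) :
    c * (Sᵀ * S).trace ≤ (Sᵀ * (U * diagonal d * Uᵀ) * S).trace := by
  rw [trace_transpose_mul_conj_diagonal_mul, trace_transpose_mul_self_eq_of_mul_transpose_eq_one hU,
    Finset.mul_sum]
  gcongr with i
  exact hd i

namespace Matrix.IsHermitian

variable {M : Matrix k k ℝ} (hM : M.IsHermitian)

theorem eigenvectorUnitary_mul_transpose :
    (hM.eigenvectorUnitary : Matrix k k ℝ) * (hM.eigenvectorUnitary : Matrix k k ℝ)ᵀ = 1 := by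
  simpa [star_eq_conjTranspose] using Unitary.coe_mul_star_self hM.eigenvectorUnitary

theorem transpose_eigenvectorUnitary_mul :
    (hM.eigenvectorUnitary : Matrix k k ℝ)ᵀ * (hM.eigenvectorUnitary : Matrix k k ℝ) = 1 := by
  simpa [star_eq_conjTranspose] using Unitary.coe_star_mul_self hM.eigenvectorUnitary

theorem eq_eigenvectorUnitary_mul_diagonal_mul_transpose :
    M = (hM.eigenvectorUnitary : Matrix k k ℝ) * diagonal hM.eigenvalues *
      (hM.eigenvectorUnitary : Matrix k k ℝ)ᵀ := by
  simpa [star_eq_conjTranspose, Function.comp_def] using hM.spectral_theorem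

end Matrix.IsHermitian

namespace Matrix.PosDef

variable {M : Matrix k k ℝ}

theorem inv_eq_eigenvectorUnitary_mul_diagonal_mul_transpose (hM : M.PosDef) :
    M⁻¹ = (hM.1.eigenvectorUnitary : Matrix k k ℝ) * diagonal (hM.1.eigenvalues)⁻¹ *
      (hM.1.eigenvectorUnitary : Matrix k k ℝ)ᵀ := by
  set U : Matrix k k ℝ := (hM.1.eigenvectorUnitary : Matrix k k ℝ)
  set d := hM.1.eigenvalues
  have hdiag : diagonal d⁻¹ * diagonal d = 1 := by
    rw [diagonal_mul_diagonal, ← diagonal_one]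
    exact congrArg diagonal (funext fun i => inv_mul_cancel₀ (hM.eigenvalues_pos i).ne')
  refine inv_eq_left_inv ?_
  calc U * diagonal d⁻¹ * Uᵀ * M
      = U * diagonal d⁻¹ * Uᵀ * (U * diagonal d * Uᵀ) :=
        congrArg _ hM.1.eq_eigenvectorUnitary_mul_diagonal_mul_transpose
    _ = U * (diagonal d⁻¹ * (Uᵀ * U) * diagonal d) * Uᵀ := by simp only [Matrix.mul_assoc]
    _ = 1 := by
        rw [hM.1.transpose_eigenvectorUnitary_mul, Matrix.mul_one, hdiag, Matrix.mul_one,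
          hM.1.eigenvectorUnitary_mul_transpose]

theorem trace_transpose_mul_inv_mul_le (hM : M.PosDef) {c : ℝ} (hc : 0 < c)
    (h : ∀ i, c ≤ hM.1.eigenvalues i) (S : Matrix k l ℝ) :
    (Sᵀ * M⁻¹ * S).trace ≤ c⁻¹ * (Sᵀ * S).trace := by
  rw [hM.inv_eq_eigenvectorUnitary_mul_diagonal_mul_transpose]
  exact trace_transpose_mul_conj_diagonal_mul_le hM.1.eigenvectorUnitary_mul_transpose
    (fun i => inv_anti₀ hc (h i)) S

theorem inv_mul_trace_le_trace_transpose_mul_inv_mul (hM : M.PosDef) {c : ℝ}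
    (h : ∀ i, hM.1.eigenvalues i ≤ c) (S : Matrix k l ℝ) :
    c⁻¹ * (Sᵀ * S).trace ≤ (Sᵀ * M⁻¹ * S).trace := by
  rw [hM.inv_eq_eigenvectorUnitary_mul_diagonal_mul_transpose]
  exact le_trace_transpose_mul_conj_diagonal_mul hM.1.eigenvectorUnitary_mul_transpose
    (fun i => inv_anti₀ (hM.eigenvalues_pos i) (h i)) S

end Matrix.PosDef

end Spectral

theorem Finset.sum_le_card_nsmul_of_covering {α M : Type*} [Fintype α] [AddCommMonoid M]
    [PartialOrder M] [IsOrderedAddMonoid M] {f : α → M} (hf : 0 ≤ f)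
    {P : Finset (Finset α)} (hP : ∀ i, ∃ I ∈ P, i ∈ I) {I : Finset α}
    (hI : ∀ J ∈ P, ∑ i ∈ J, f i ≤ ∑ i ∈ I, f i) :
    ∑ i, f i ≤ P.card • ∑ i ∈ I, f i := by
  classical
  choose block hblockP hmem_block using hP
  calc ∑ i, f i = ∑ J ∈ P, ∑ i with block i = J, f i :=
        (Finset.sum_fiberwise_of_maps_to (fun i _ => hblockP i) f).symm
    _ ≤ ∑ J ∈ P, ∑ i ∈ J, f i := by
        refine Finset.sum_le_sum fun J _ => Finset.sum_le_sum_of_subset_of_nonneg ?_ ?_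
        · exact fun i hi => (Finset.mem_filter.1 hi).2 ▸ hmem_block i
        · exact fun i _ _ => hf i
    _ ≤ P.card • ∑ i ∈ I, f i := Finset.sum_le_card_nsmul _ _ _ hI

theorem div_mul_mul_le_of_le_inv_mul_of_le_mul_of_inv_mul_le {a b r s c c' μ : ℝ}
    (hc : 0 < c) (hc' : 0 < c') (hμ : 0 < μ)
    (ha : a ≤ c⁻¹ * r) (hr : r ≤ μ * s) (hb : c'⁻¹ * s ≤ b) : c / (μ * c') * a ≤ b :=
  calc c / (μ * c') * a ≤ c / (μ * c') * (c⁻¹ * r) := by gcongr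
    _ = r / (μ * c') := by field_simp
    _ ≤ μ * s / (μ * c') := by gcongr
    _ = c'⁻¹ * s := by field_simp
    _ ≤ b := hb

section RowSel

variable {n : ℕ} {α : Type*} (I : Finset (Fin n))

theorem rowSel_mul (A : Matrix (Fin n) α ℝ) : rowSel I * A = A.submatrix (↑) id := by
  ext i j
  simp [rowSel, mul_apply]

theorem mul_rowSel_transpose (A : Matrix α (Fin n) ℝ) : A * (rowSel I)ᵀ = A.submatrix id (↑) := by
  ext i j
  simp [rowSel, mul_apply]

theorem Matrix.PosDef.rowSel_mul_mul_rowSel_transpose {K : Matrix (Fin n) (Fin n) ℝ}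
    (hK : K.PosDef) : (rowSel I * K * (rowSel I)ᵀ).PosDef := by
  rw [rowSel_mul, mul_rowSel_transpose, submatrix_submatrix]
  exact hK.submatrix Subtype.val_injective

theorem trace_transpose_mul_self_rowSel_mul [Fintype α] (R : Matrix (Fin n) α ℝ) :
    ((rowSel I * R)ᵀ * (rowSel I * R)).trace = ∑ i ∈ I, ∑ j, R i j ^ 2 := by
  rw [trace_transpose_mul_self, rowSel_mul]
  exact Finset.sum_coe_sort I fun i => ∑ j, R i j ^ 2

end RowSel

section QuadObj

variable {n l : ℕ} {K : Matrix (Fin n) (Fin n) ℝ} (B : Matrix (Fin n) (Fin l) ℝ)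

theorem quadObj_add (hK : K.IsSymm) (W D : Matrix (Fin n) (Fin l) ℝ) :
    quadObj K B (W + D) =
      quadObj K B W + (1 / 2) * (Dᵀ * K * D).trace - ((B - K * W)ᵀ * D).trace := by
  have hcross : (Dᵀ * K * W).trace = (Wᵀ * K * D).trace := by
    rw [← trace_transpose, transpose_mul, transpose_mul, transpose_transpose, hK.eq,
      Matrix.mul_assoc]
  simp only [quadObj, transpose_add, Matrix.add_mul, Matrix.mul_add, trace_add, transpose_sub,
    transpose_mul, hK.eq, Matrix.sub_mul, trace_sub, hcross]
  ring

theorem quadObj_sub_quadObj_inv_mul (hK : K.IsSymm) (hdet : IsUnit K.det)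
    (W : Matrix (Fin n) (Fin l) ℝ) :
    quadObj K B W - quadObj K B (K⁻¹ * B) =
      (1 / 2) * ((B - K * W)ᵀ * K⁻¹ * (B - K * W)).trace := by
  have hres : B - K * (K⁻¹ * B) = 0 := by
    rw [← Matrix.mul_assoc, mul_nonsing_inv _ hdet, Matrix.one_mul, sub_self]
  have hdiff : W - K⁻¹ * B = -(K⁻¹ * (B - K * W)) := by
    rw [Matrix.mul_sub, ← Matrix.mul_assoc, nonsing_inv_mul _ hdet, Matrix.one_mul, neg_sub]
  have hinvT : (K⁻¹)ᵀ = K⁻¹ := by rw [transpose_nonsing_inv, hK.eq]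
  have h := quadObj_add B hK (K⁻¹ * B) (W - K⁻¹ * B)
  rw [add_sub_cancel, hres, transpose_zero, Matrix.zero_mul, trace_zero, sub_zero] at h
  rw [h, add_sub_cancel_left, hdiff]
  simp only [transpose_neg, transpose_mul, hinvT, Matrix.neg_mul, Matrix.mul_neg, neg_neg]
  rw [Matrix.mul_assoc _ K⁻¹ K, nonsing_inv_mul _ hdet, Matrix.mul_one, Matrix.mul_assoc]

theorem quadObj_add_projection (hK : K.IsSymm) {k : Type*} [Fintype k] [DecidableEq k]
    (E : Matrix k (Fin n) ℝ) (hdet : IsUnit (E * K * Eᵀ).det) (W : Matrix (Fin n) (Fin l) ℝ) :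
    quadObj K B (W + Eᵀ * (E * K * Eᵀ)⁻¹ * (E * (B - K * W))) =
      quadObj K B W -
        (1 / 2) * ((E * (B - K * W))ᵀ * (E * K * Eᵀ)⁻¹ * (E * (B - K * W))).trace := by
  set M := E * K * Eᵀ
  set S := E * (B - K * W)
  have hinvT : (M⁻¹)ᵀ = M⁻¹ := by
    rw [transpose_nonsing_inv]
    simp only [M, transpose_mul, transpose_transpose, hK.eq, Matrix.mul_assoc]
  have hquad : (Eᵀ * M⁻¹ * S)ᵀ * K * (Eᵀ * M⁻¹ * S) = Sᵀ * M⁻¹ * S := by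
    calc (Eᵀ * M⁻¹ * S)ᵀ * K * (Eᵀ * M⁻¹ * S) = Sᵀ * M⁻¹ * E * K * (Eᵀ * M⁻¹ * S) := by
          rw [transpose_mul (Eᵀ * M⁻¹) S, transpose_mul Eᵀ, transpose_transpose, hinvT,
            ← Matrix.mul_assoc Sᵀ]
      _ = Sᵀ * M⁻¹ * M * M⁻¹ * S := by simp only [M, Matrix.mul_assoc]
      _ = Sᵀ * M⁻¹ * S := by
          rw [Matrix.mul_assoc (Sᵀ * M⁻¹) M M⁻¹, mul_nonsing_inv _ hdet, Matrix.mul_one]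
  have hlin : (B - K * W)ᵀ * (Eᵀ * M⁻¹ * S) = Sᵀ * M⁻¹ * S := by
    simp only [S, transpose_mul, Matrix.mul_assoc]
  rw [quadObj_add B hK, hquad, hlin]
  ring

end QuadObj

theorem altproj_gs_one_step_contraction_general {n l : ℕ}
    (K : Matrix (Fin n) (Fin n) ℝ) (hK : K.PosDef)
    (B : Matrix (Fin n) (Fin l) ℝ)
    (P : Finset (Finset (Fin n))) (m : ℕ) (hm : P.card = m)
    (hcover : ∀ i : Fin n, ∃ I ∈ P, i ∈ I)
    (lammin : ℝ) (hmin : IsLeast (Set.range hK.1.eigenvalues) lammin)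
    (hsub : ∀ I : Finset (Fin n), (rowSel I * K * (rowSel I)ᵀ).IsHermitian)
    (lam'max : ℝ)
    (hlam : IsGreatest {x : ℝ | ∃ I ∈ P, ∃ i : I, x = (hsub I).eigenvalues i} lam'max)
    (W W' R : Matrix (Fin n) (Fin l) ℝ) (hR : R = B - K * W)
    (Isel : Finset (Fin n)) (hIsel : Isel ∈ P)
    (hGS : ∀ J ∈ P, (∑ i ∈ J, ∑ j : Fin l, (R i j) ^ 2)
      ≤ ∑ i ∈ Isel, ∑ j : Fin l, (R i j) ^ 2)
    (hW' : W' = W + (rowSel Isel)ᵀ * (rowSel Isel * K * (rowSel Isel)ᵀ)⁻¹ *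
      (rowSel Isel * R)) :
    quadObj K B W' - quadObj K B (K⁻¹ * B)
      ≤ (1 - lammin / (m * lam'max)) * (quadObj K B W - quadObj K B (K⁻¹ * B)) := by
  have hKsymm : K.IsSymm := isHermitian_iff_isSymm.mp hK.1
  have hKdet : IsUnit K.det := hK.det_pos.ne'.isUnit
  have hM := hK.rowSel_mul_mul_rowSel_transpose Isel
  set S := rowSel Isel * R
  have hgap := quadObj_sub_quadObj_inv_mul B hKsymm hKdet W
  have hstep := quadObj_add_projection B hKsymm (rowSel Isel) hM.det_pos.ne'.isUnit W
  rw [← hR, ← hW'] at hstep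
  rw [← hR] at hgap
  obtain ⟨⟨i₀, hi₀⟩, hmin_le⟩ := hmin
  obtain ⟨⟨I, -, i, hi⟩, hlam_ge⟩ := hlam
  have hmin_pos : 0 < lammin := hi₀ ▸ hK.eigenvalues_pos i₀
  have hlam_pos : 0 < lam'max := hi ▸ (hK.rowSel_mul_mul_rowSel_transpose I).eigenvalues_pos i
  have hm_pos : (0 : ℝ) < m := Nat.cast_pos.mpr (hm ▸ Finset.card_pos.mpr ⟨Isel, hIsel⟩)
  have ha := hK.trace_transpose_mul_inv_mul_le hmin_pos
    (fun i => hmin_le (Set.mem_range_self i)) R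
  have hb := hM.inv_mul_trace_le_trace_transpose_mul_inv_mul
    (fun i => hlam_ge ⟨Isel, hIsel, i, rfl⟩) S
  have hr : (Rᵀ * R).trace ≤ m * (Sᵀ * S).trace := by
    rw [trace_transpose_mul_self, trace_transpose_mul_self_rowSel_mul, ← hm, ← nsmul_eq_mul]
    exact Finset.sum_le_card_nsmul_of_covering (fun _ => by positivity) hcover hGS
  have hdecrease := div_mul_mul_le_of_le_inv_mul_of_le_mul_of_inv_mul_le
    hmin_pos hlam_pos hm_pos ha hr hb
  rw [hstep, sub_right_comm, hgap]
  linarith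

/-- One alternating projection update with the Gauss–Southwell block selection
rule contracts the suboptimality of the quadratic objective by the factor
`1 − λ_min/(m λ'_max)`. -/
theorem altproj_gs_one_step_contraction {n l : ℕ}
    (K : Matrix (Fin n) (Fin n) ℝ) (hK : K.PosDef)
    (B : Matrix (Fin n) (Fin l) ℝ)
    (P : Finset (Finset (Fin n))) (m : ℕ) (hm : P.card = m)
    (hcover : ∀ i : Fin n, ∃ I ∈ P, i ∈ I)
    (hdisj : ∀ I ∈ P, ∀ J ∈ P, I ≠ J → Disjoint I J)
    (hblockne : ∀ I ∈ P, I.Nonempty)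
    (lammin : ℝ) (hmin : IsLeast (Set.range hK.1.eigenvalues) lammin)
    (hsub : ∀ I : Finset (Fin n), (rowSel I * K * (rowSel I)ᵀ).IsHermitian)
    (lam'max : ℝ)
    (hlam : IsGreatest {x : ℝ | ∃ I ∈ P, ∃ i : I, x = (hsub I).eigenvalues i} lam'max)
    (W W' R : Matrix (Fin n) (Fin l) ℝ) (hR : R = B - K * W)
    (Isel : Finset (Fin n)) (hIsel : Isel ∈ P)
    (hGS : ∀ J ∈ P, (∑ i ∈ J, ∑ j : Fin l, (R i j) ^ 2)
      ≤ ∑ i ∈ Isel, ∑ j : Fin l, (R i j) ^ 2)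
    (hW' : W' = W + (rowSel Isel)ᵀ * (rowSel Isel * K * (rowSel Isel)ᵀ)⁻¹ *
      (rowSel Isel * R)) :
    quadObj K B W' - quadObj K B (K⁻¹ * B)
      ≤ (1 - lammin / (m * lam'max)) * (quadObj K B W - quadObj K B (K⁻¹ * B)) :=
  altproj_gs_one_step_contraction_general K hK B P m hm hcover lammin hmin hsub lam'max hlam W W' R
    hR Isel hIsel hGS hW'
end
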